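/- arXiv:2205.11114 — 2 statements merged into one kernel-verified Lean document; each statement's English description precedes it below -/
import Mathlib

section
/- Let ℓ be a prime number and let A → B be an injective homomorphism of commutative rings in which ℓ is invertible. Then a Laurent polynomial Q ∈ B[z^{±1}] lies in the image of the induced map A[z^{±1}] → B[z^{±1}] (i.e., has all its coefficients in A) if and only if, for every n ≥ 0, the class of Q in B[z^{±1}]/(Φ_{ℓⁿ}) lies in the image of the induced map A[z^{±1}]/(Φ_{ℓⁿ}) → B[z^{±1}]/(Φ_{ℓⁿ}). In other words, the commutative square formed by the maps c_A : A[z^{±1}] → ∏_{n≥0} A[z^{±1}]/(Φ_{ℓⁿ}), c_B : B[z^{±1}] → ∏_{n≥0} B[z^{±1}]/(Φ_{ℓⁿ}) and the maps induced by A → B is cartesian. -/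
/-! Since `Φ_{ℓⁿ}` is monic with constant term `1`, `z` is invertible modulo it, so
`R[z]/(Φ_{ℓⁿ}) → R[z^{±1}]/(Φ_{ℓⁿ})` is an isomorphism and every class has a unique polynomial
representative of degree `< φ(ℓⁿ)`, obtained by division with remainder, which commutes with
`A → B`. Write `Q = q z^{-d}` with `q` a polynomial and take `n` with `deg q < φ(ℓⁿ)`: then `q` is
the reduced representative of the class of `Q z^d`, and if that class comes from `A`, so does `q`. -/

open LaurentPolynomial

/-- The `ℓⁿ`-th cyclotomic polynomial `Φ_{ℓⁿ}`, viewed as an element of `A[z^{±1}]`. -/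
noncomputable def cyclotomicLaurent (A : Type*) [CommRing A] (ℓ n : ℕ) :
    LaurentPolynomial A :=
  Polynomial.toLaurent (Polynomial.cyclotomic (ℓ ^ n) A)

/-- The ring homomorphism `A[z^{±1}] → B[z^{±1}]` induced on Laurent polynomials by a ring
homomorphism `f : A → B` (applying `f` to each coefficient). -/
noncomputable def laurentMapCoeff {A B : Type*} [CommRing A] [CommRing B] (f : A →+* B) :
    LaurentPolynomial A →+* LaurentPolynomial B :=
  AddMonoidAlgebra.liftNCRingHom (AddMonoidAlgebra.singleZeroRingHom.comp f)
    (AddMonoidAlgebra.of B ℤ) fun _ _ => Commute.all _ _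

namespace Polynomial

theorem isCoprime_X_of_isUnit_coeff_zero {R : Type*} [CommRing R] {p : R[X]}
    (h : IsUnit (p.coeff 0)) : IsCoprime p X := by
  rw [← X_mul_divX_add p, add_comm]
  exact (isCoprime_one_left.of_isCoprime_of_dvd_left (h.map C).dvd).add_mul_left_left _

variable {R : Type*} [CommRing R] {Φ : R[X]}

theorem exists_toLaurent_dvd_sub (hΦ : IsCoprime Φ X) (P : R[T;T⁻¹]) :
    ∃ g : R[X], toLaurent Φ ∣ P - toLaurent g := by
  obtain ⟨e, p, hp⟩ := P.exists_T_pow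
  obtain ⟨a, b, hab⟩ := hΦ.pow_right (n := e)
  have hab' : toLaurent a * toLaurent Φ + toLaurent b * T e = 1 := by
    simpa using congrArg toLaurent hab
  refine ⟨p * b, P * toLaurent a, ?_⟩
  rw [map_mul, hp]
  linear_combination (-P) * hab'

theorem toLaurent_dvd_toLaurent_iff (hΦ : IsCoprime Φ X) {p : R[X]} :
    toLaurent Φ ∣ toLaurent p ↔ Φ ∣ p := by
  refine ⟨fun ⟨S, hS⟩ => ?_, _root_.map_dvd toLaurent⟩
  obtain ⟨e, s, hs⟩ := S.exists_T_pow
  have : p * X ^ e = Φ * s := toLaurent_injective <| by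
    rw [map_mul, map_mul, hs, toLaurent_X_pow, hS, mul_assoc]
  exact (hΦ.pow_right (n := e)).dvd_of_dvd_mul_right ⟨s, this⟩

end Polynomial

open Polynomial

section

variable {A B : Type*} [CommRing A] [CommRing B] (f : A →+* B)

theorem laurentMapCoeff_C_mul_T (a : A) (n : ℤ) :
    laurentMapCoeff f (LaurentPolynomial.C a * T n) = LaurentPolynomial.C (f a) * T n := by
  rw [← single_eq_C_mul_T, laurentMapCoeff, AddMonoidAlgebra.liftNCRingHom_single]
  rfl

theorem laurentMapCoeff_T (n : ℤ) : laurentMapCoeff f (T n) = T n := by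
  simpa using laurentMapCoeff_C_mul_T f 1 n

theorem laurentMapCoeff_comp_toLaurent :
    (laurentMapCoeff f).comp toLaurent = toLaurent.comp (mapRingHom f) := by
  refine ringHom_ext (fun a => ?_) ?_
  · simpa using laurentMapCoeff_C_mul_T f a 0
  · simpa using laurentMapCoeff_T f 1

theorem laurentMapCoeff_toLaurent (p : A[X]) :
    laurentMapCoeff f (toLaurent p) = toLaurent (p.map f) :=
  RingHom.congr_fun (laurentMapCoeff_comp_toLaurent f) p

end

theorem Nat.lt_totient_prime_pow_succ {p : ℕ} (hp : p.Prime) (k : ℕ) :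
    k < Nat.totient (p ^ (k + 1)) := by
  rw [Nat.totient_prime_pow_succ hp]
  calc k < p ^ k := Nat.lt_pow_self hp.one_lt
    _ ≤ p ^ k * (p - 1) := Nat.le_mul_of_pos_right _ (Nat.sub_pos_of_lt hp.one_lt)

theorem mem_range_laurentMapCoeff_of_dvd_sub {A B : Type*} [CommRing A] [CommRing B]
    (f : A →+* B) {Φ : A[X]} (hm : Φ.Monic) (hΦ : IsCoprime Φ X) {Q : B[T;T⁻¹]} {d : ℕ}
    {q : B[X]} (hq : toLaurent q = Q * T d) (hdeg : q.degree < (Φ.map f).degree)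
    {P : A[T;T⁻¹]} (hP : toLaurent (Φ.map f) ∣ Q - laurentMapCoeff f P) :
    Q ∈ Set.range (laurentMapCoeff f) := by
  nontriviality B
  obtain ⟨g, hg⟩ := exists_toLaurent_dvd_sub hΦ (P * T d)
  have hqg : toLaurent (Φ.map f) ∣ toLaurent (q - g.map f) := by
    have h1 : toLaurent (Φ.map f) ∣ (Q - laurentMapCoeff f P) * T d := dvd_mul_of_dvd_left hP _
    have h2 := _root_.map_dvd (laurentMapCoeff f) hg
    rw [laurentMapCoeff_toLaurent, map_sub, map_mul, laurentMapCoeff_T,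
      laurentMapCoeff_toLaurent] at h2
    rw [map_sub, hq]
    convert dvd_add h1 h2 using 1
    ring
  rw [toLaurent_dvd_toLaurent_iff (by simpa using hΦ.map (mapRingHom f))] at hqg
  have hqr : q = (g %ₘ Φ).map f := by
    rw [map_modByMonic f hm, ← modByMonic_eq_of_dvd_sub (hm.map f) hqg,
      (modByMonic_eq_self_iff (hm.map f)).mpr hdeg]
  refine ⟨toLaurent (g %ₘ Φ) * T (-d), ?_⟩
  rw [map_mul, laurentMapCoeff_toLaurent, ← hqr, hq, laurentMapCoeff_T, mul_assoc, ← T_add,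
    add_neg_cancel, T_zero, mul_one]

theorem laurent_cartesian_square_general {A B : Type*} [CommRing A] [CommRing B] {ℓ : ℕ}
    (hℓ : Nat.Prime ℓ) (f : A →+* B) (Q : LaurentPolynomial B) :
    Q ∈ Set.range (laurentMapCoeff f) ↔
      ∀ n : ℕ, Ideal.Quotient.mk (Ideal.span {cyclotomicLaurent B ℓ n}) Q ∈
        Set.range ((Ideal.Quotient.mk (Ideal.span {cyclotomicLaurent B ℓ n})).comp
          (laurentMapCoeff f)) := by
  refine ⟨fun ⟨P, hP⟩ n => ⟨P, by rw [RingHom.comp_apply, hP]⟩, fun h => ?_⟩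
  nontriviality B
  obtain ⟨d, q, hq⟩ := Q.exists_T_pow
  have hn : 1 < ℓ ^ (q.natDegree + 1) := Nat.one_lt_pow (Nat.succ_ne_zero _) hℓ.one_lt
  obtain ⟨P, hP⟩ := h (q.natDegree + 1)
  rw [RingHom.comp_apply, Ideal.Quotient.eq, Ideal.mem_span_singleton, cyclotomicLaurent,
    ← map_cyclotomic _ f] at hP
  refine mem_range_laurentMapCoeff_of_dvd_sub f (cyclotomic.monic _ A)
    (isCoprime_X_of_isUnit_coeff_zero ?_) hq ?_ (dvd_sub_comm.mp hP)
  · rw [cyclotomic_coeff_zero A hn]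
    exact isUnit_one
  · rw [map_cyclotomic, degree_cyclotomic]
    exact degree_le_natDegree.trans_lt (by exact_mod_cast Nat.lt_totient_prime_pow_succ hℓ _)

/-- Lemma 2.2.5(2): for a prime `ℓ` invertible in `A` and `B` and an injective ring
homomorphism `A → B`, a Laurent polynomial `Q ∈ B[z^{±1}]` has all its coefficients in `A`
(i.e. lies in the image of `A[z^{±1}] → B[z^{±1}]`) if and only if for every `n ≥ 0` its class
modulo `Φ_{ℓⁿ}` lies in the image of the induced map
`A[z^{±1}]/(Φ_{ℓⁿ}) → B[z^{±1}]/(Φ_{ℓⁿ})`; that is, the square formed by `c_A`, `c_B` and the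
maps induced by `A → B` is cartesian. -/
theorem laurent_cartesian_square {A B : Type*} [CommRing A] [CommRing B] {ℓ : ℕ}
    (hℓ : Nat.Prime ℓ) (hunitA : IsUnit (ℓ : A)) (hunitB : IsUnit (ℓ : B))
    (f : A →+* B) (hf : Function.Injective f) (Q : LaurentPolynomial B) :
    Q ∈ Set.range (laurentMapCoeff f) ↔
      ∀ n : ℕ, Ideal.Quotient.mk (Ideal.span {cyclotomicLaurent B ℓ n}) Q ∈
        Set.range ((Ideal.Quotient.mk (Ideal.span {cyclotomicLaurent B ℓ n})).comp
          (laurentMapCoeff f)) :=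
  laurent_cartesian_square_general hℓ f Q
end

section
/- Let (A_α) be a directed system of commutative R-algebras with colimit A, and let f ∈ F(A), i.e., f : A ⊗_R C → A[z^{±1}] is a homomorphism of Hopf algebras over A extending all the u_n. Then there exists an index α and an element f_α ∈ F(A_α) (a Hopf algebra homomorphism A_α ⊗_R C → A_α[z^{±1}] extending all the u_n) whose base change along A_α → A equals f. -/
open LaurentPolynomial TensorProduct

noncomputable section

/-- The comultiplication of the group Hopf algebra `B[G]` (each group element is grouplike),
as a `B`-algebra homomorphism `B[G] → B[G] ⊗[B] B[G]`. -/
def groupAlgComul (B : Type*) [CommRing B] (G : Type*) [AddCommMonoid G] :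
    AddMonoidAlgebra B G →ₐ[B] AddMonoidAlgebra B G ⊗[B] AddMonoidAlgebra B G :=
  AddMonoidAlgebra.lift B _ G
    { toFun := fun g => AddMonoidAlgebra.of B G g ⊗ₜ[B] AddMonoidAlgebra.of B G g
      map_one' := by
        simp only [map_one, Algebra.TensorProduct.one_def]
      map_mul' := fun x y => by
        simp only [map_mul, Algebra.TensorProduct.tmul_mul_tmul] }

/-- The counit of the group Hopf algebra `B[G]`, as a `B`-algebra homomorphism `B[G] → B`. -/
def groupAlgCounit (B : Type*) [CommRing B] (G : Type*) [AddCommMonoid G] :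
    AddMonoidAlgebra B G →ₐ[B] B :=
  AddMonoidAlgebra.lift B B G 1

/-- The homomorphism `A[G] → B[G]` of group algebras induced by an `R`-algebra homomorphism
`φ : A → B` on coefficients. -/
def groupAlgMapCoeff {R A B : Type*} [CommRing R] [CommRing A] [CommRing B]
    [Algebra R A] [Algebra R B] (G : Type*) [AddCommMonoid G] (φ : A →ₐ[R] B) :
    AddMonoidAlgebra A G →ₐ[R] AddMonoidAlgebra B G :=
  AddMonoidAlgebra.liftNCAlgHom (AddMonoidAlgebra.singleZeroAlgHom.comp φ)
    (AddMonoidAlgebra.of B G) fun _ _ => Commute.all _ _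

/-- The reduction map `A[z^{±1}] → A[z]/(z^N - 1)`, realized as the `A`-algebra homomorphism
from the group algebra of `ℤ` to the group algebra of `ℤ/Nℤ` induced by the canonical
projection `ℤ → ℤ/Nℤ`. -/
def laurentToCyclic (A : Type*) [CommRing A] (N : ℕ) :
    LaurentPolynomial A →ₐ[A] AddMonoidAlgebra A (ZMod N) :=
  AddMonoidAlgebra.lift A _ ℤ
    ((AddMonoidAlgebra.of A (ZMod N)).comp
      (AddMonoidHom.toMultiplicative (Int.castAddHom (ZMod N))))

/-- The projection `A[z]/(z^N - 1) → A[z]/(z^M - 1)` (for `M ∣ N`) sending `z` to `z`,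
realized as the map of group algebras induced by `ℤ/Nℤ → ℤ/Mℤ`. -/
def cyclicProj (A : Type*) [CommRing A] {M N : ℕ} (h : M ∣ N) :
    AddMonoidAlgebra A (ZMod N) →ₐ[A] AddMonoidAlgebra A (ZMod M) :=
  AddMonoidAlgebra.lift A _ (ZMod N)
    ((AddMonoidAlgebra.of A (ZMod M)).comp
      (AddMonoidHom.toMultiplicative (ZMod.castHom h (ZMod M)).toAddMonoidHom))

/-- The `R`-algebra homomorphism `C ⊗[R] C → A[G] ⊗[A] A[G]` induced by
`g : C → A[G]` on each factor. -/
def tensorSquare {R : Type*} [CommRing R] {C : Type*} [CommRing C] [Algebra R C]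
    {A : Type*} [CommRing A] [Algebra R A] {G : Type*} [AddCommMonoid G]
    (g : C →ₐ[R] AddMonoidAlgebra A G) :
    C ⊗[R] C →ₐ[R] AddMonoidAlgebra A G ⊗[A] AddMonoidAlgebra A G :=
  Algebra.TensorProduct.lift
    ((Algebra.TensorProduct.includeLeft :
        AddMonoidAlgebra A G →ₐ[R] AddMonoidAlgebra A G ⊗[A] AddMonoidAlgebra A G).comp g)
    (((Algebra.TensorProduct.includeRight :
        AddMonoidAlgebra A G →ₐ[A] AddMonoidAlgebra A G ⊗[A] AddMonoidAlgebra A G).restrictScalars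
          R).comp g)
    fun _ _ => Commute.all _ _

/-- An `R`-algebra homomorphism `g : C → A[G]` from an `R`-Hopf algebra `C` to the group
algebra `A[G]` over an `R`-algebra `A` is a homomorphism of Hopf algebras (equivalently, the
induced `A`-algebra homomorphism `A ⊗_R C → A[G]` is a homomorphism of Hopf algebras over `A`)
if it is compatible with the comultiplications and the counits. -/
def IsHopfAlgHomToGroupAlg {R : Type*} [CommRing R] {C : Type*} [CommRing C]
    [HopfAlgebra R C] {A : Type*} [CommRing A] [Algebra R A] {G : Type*} [AddCommMonoid G]
    (g : C →ₐ[R] AddMonoidAlgebra A G) : Prop :=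
  ((groupAlgComul A G).restrictScalars R).comp g =
      (tensorSquare g).comp (Bialgebra.comulAlgHom R C) ∧
    ((groupAlgCounit A G).restrictScalars R).comp g =
      (Algebra.ofId R A).comp (Bialgebra.counitAlgHom R C)

/-- The set `F(A)` of the paper (Theorem 2.1.2), in terms of restricted data: a homomorphism
of Hopf algebras `A ⊗_R C → A[z^{±1}]` over `A` corresponds, by the universal property of
base change, to an `R`-algebra homomorphism `g : C → A[z^{±1}]` compatible with
comultiplications and counits.  The membership conditions are: `g` is a Hopf algebra
homomorphism, and for every `n ≥ 0` the composite of `g` with the reduction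
`A[z^{±1}] → A[z]/(z^{ℓⁿ} - 1)` is the base change to `A` of `u_n`. -/
def laurentHopfHomSet {R : Type*} [CommRing R] {C : Type*} [CommRing C] [HopfAlgebra R C]
    (ℓ : ℕ) (u : ∀ n : ℕ, C →ₐ[R] AddMonoidAlgebra R (ZMod (ℓ ^ n)))
    (A : Type*) [CommRing A] [Algebra R A] : Set (C →ₐ[R] LaurentPolynomial A) :=
  {g | IsHopfAlgHomToGroupAlg g ∧ ∀ n : ℕ,
    ((laurentToCyclic A (ℓ ^ n)).restrictScalars R).comp g =
      (groupAlgMapCoeff (ZMod (ℓ ^ n)) (Algebra.ofId R A)).comp (u n)}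

/-! Write `I` for the kernel of `R → A`. Since `ℓ ≥ 2`, for large `n` the reduction
`A[z^{±1}] → A[z]/(z^{ℓⁿ} - 1)` is injective on the support of a given `f c`, so every coefficient
of `f c` is the image of a coefficient of `u n c`: `f` is defined over `R ⧸ I ⊆ A`. The Hopf and
compatibility conditions can be read off coefficientwise in the free modules `A[ℤ]` and
`A[ℤ] ⊗ A[ℤ]`, hence descend along the injection `R ⧸ I → A` and push forward along any
`R ⧸ I → B`. As `R` is noetherian (being of finite type over `ℤ`), `I` is finitely generated,
so it already dies in some `B j`; pushing `f` forward along the induced `R ⧸ I → B j` gives the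
required element of `F(B j)`. -/

section
variable {R A B : Type*} [CommRing R] [CommRing A] [CommRing B] [Algebra R A] [Algebra R B]
  {G : Type*} [AddCommMonoid G]

theorem groupAlgMapCoeff_single (ψ : A →ₐ[R] B) (g : G) (a : A) :
    groupAlgMapCoeff G ψ (AddMonoidAlgebra.single g a) = AddMonoidAlgebra.single g (ψ a) := by
  change AddMonoidAlgebra.liftNC _ _ (AddMonoidAlgebra.single g a) = _
  simp [AddMonoidAlgebra.liftNC_single, AddMonoidAlgebra.of_apply,
    AddMonoidAlgebra.single_mul_single]

theorem coeff_groupAlgMapCoeff (ψ : A →ₐ[R] B) (x : AddMonoidAlgebra A G) (g : G) :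
    (groupAlgMapCoeff G ψ x).coeff g = ψ (x.coeff g) := by
  classical
  induction x using AddMonoidAlgebra.induction_linear with
  | zero => simp
  | add x y hx hy => simp [hx, hy]
  | single g' a =>
    rw [groupAlgMapCoeff_single]
    by_cases h : g' = g <;> simp [AddMonoidAlgebra.coeff_single, h]

theorem groupAlgMapCoeff_injective {ψ : A →ₐ[R] B} (hψ : Function.Injective ψ) :
    Function.Injective (groupAlgMapCoeff G ψ) := fun x y h => by
  ext g
  exact hψ (by rw [← coeff_groupAlgMapCoeff, ← coeff_groupAlgMapCoeff, h])

theorem groupAlgMapCoeff_comp {B' : Type*} [CommRing B'] [Algebra R B'] (ψ : A →ₐ[R] B)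
    (χ : B →ₐ[R] B') :
    (groupAlgMapCoeff G χ).comp (groupAlgMapCoeff G ψ) = groupAlgMapCoeff G (χ.comp ψ) := by
  refine AlgHom.ext fun x => ?_
  ext g
  simp [coeff_groupAlgMapCoeff]

theorem groupAlgMapCoeff_comp_ofId (ψ : A →ₐ[R] B) :
    (groupAlgMapCoeff G ψ).comp (groupAlgMapCoeff G (Algebra.ofId R A)) =
      groupAlgMapCoeff G (Algebra.ofId R B) := by
  rw [groupAlgMapCoeff_comp, Subsingleton.elim (ψ.comp _) (Algebra.ofId R B)]

theorem groupAlgCounit_groupAlgMapCoeff (ψ : A →ₐ[R] B) (x : AddMonoidAlgebra A G) :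
    groupAlgCounit B G (groupAlgMapCoeff G ψ x) = ψ (groupAlgCounit A G x) := by
  induction x using AddMonoidAlgebra.induction_linear with
  | zero => simp
  | add x y hx hy => simp only [map_add, hx, hy]
  | single g a => simp [groupAlgMapCoeff_single, groupAlgCounit]

def tensorCoeff (A : Type*) [CommRing A] (G : Type*) [AddCommMonoid G] :
    AddMonoidAlgebra A G ⊗[A] AddMonoidAlgebra A G ≃ₗ[A] (G × G →₀ A) :=
  (TensorProduct.congr (AddMonoidAlgebra.coeffLinearEquiv A)
    (AddMonoidAlgebra.coeffLinearEquiv A)).trans (finsuppTensorFinsupp' A G G)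

theorem tensorCoeff_tmul_apply (x y : AddMonoidAlgebra A G) (g h : G) :
    tensorCoeff A G (x ⊗ₜ y) (g, h) = x.coeff g * y.coeff h :=
  finsuppTensorFinsupp'_apply_apply A G G _ _ g h

theorem tensorSquare_tmul {C : Type*} [CommRing C] [Algebra R C]
    (g : C →ₐ[R] AddMonoidAlgebra A G) (x y : C) :
    tensorSquare g (x ⊗ₜ[R] y) = g x ⊗ₜ[A] g y := by
  simp [tensorSquare, Algebra.TensorProduct.tmul_mul_tmul]

theorem groupAlgComul_single (g : G) (a : A) :
    groupAlgComul A G (AddMonoidAlgebra.single g a) =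
      AddMonoidAlgebra.single g a ⊗ₜ[A] AddMonoidAlgebra.single g 1 := by
  simp [groupAlgComul, AddMonoidAlgebra.lift_single, AddMonoidAlgebra.of_apply,
    TensorProduct.smul_tmul', AddMonoidAlgebra.smul_single]

theorem tensorCoeff_groupAlgComul_groupAlgMapCoeff (ψ : A →ₐ[R] B) (x : AddMonoidAlgebra A G) :
    tensorCoeff B G (groupAlgComul B G (groupAlgMapCoeff G ψ x)) =
      Finsupp.mapRange ψ (map_zero ψ) (tensorCoeff A G (groupAlgComul A G x)) := by
  classical
  induction x using AddMonoidAlgebra.induction_linear with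
  | zero => ext; simp
  | add x y hx hy => simp only [map_add, hx, hy, Finsupp.mapRange_add (map_add ψ)]
  | single g a =>
    ext ⟨g₁, g₂⟩
    simp only [groupAlgMapCoeff_single, groupAlgComul_single, Finsupp.mapRange_apply,
      tensorCoeff_tmul_apply, AddMonoidAlgebra.coeff_single, Finsupp.single_apply]
    split_ifs <;> simp

theorem tensorCoeff_tensorSquare_groupAlgMapCoeff {C : Type*} [CommRing C] [Algebra R C]
    (ψ : A →ₐ[R] B) (g : C →ₐ[R] AddMonoidAlgebra A G) (ξ : C ⊗[R] C) :
    tensorCoeff B G (tensorSquare ((groupAlgMapCoeff G ψ).comp g) ξ) =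
      Finsupp.mapRange ψ (map_zero ψ) (tensorCoeff A G (tensorSquare g ξ)) := by
  induction ξ with
  | zero => ext; simp
  | add ξ₁ ξ₂ h₁ h₂ => simp only [map_add, h₁, h₂, Finsupp.mapRange_add (map_add ψ)]
  | tmul x y =>
    ext ⟨g₁, g₂⟩
    simp [tensorSquare_tmul, tensorCoeff_tmul_apply, coeff_groupAlgMapCoeff]

section HopfCondition

variable {C : Type*} [CommRing C] [HopfAlgebra R C] {g : C →ₐ[R] AddMonoidAlgebra A G}

theorem IsHopfAlgHomToGroupAlg.map (hg : IsHopfAlgHomToGroupAlg g) (ψ : A →ₐ[R] B) :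
    IsHopfAlgHomToGroupAlg ((groupAlgMapCoeff G ψ).comp g) := by
  refine ⟨AlgHom.ext fun c => (tensorCoeff B G).injective ?_, AlgHom.ext fun c => ?_⟩
  · have hc := congr(tensorCoeff A G ($(hg.1) c))
    simp only [AlgHom.comp_apply, AlgHom.coe_restrictScalars'] at hc
    simp only [AlgHom.comp_apply, AlgHom.coe_restrictScalars',
      tensorCoeff_groupAlgComul_groupAlgMapCoeff, tensorCoeff_tensorSquare_groupAlgMapCoeff, hc]
  · have hc := congr($(hg.2) c)
    simp_all [groupAlgCounit_groupAlgMapCoeff]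

theorem IsHopfAlgHomToGroupAlg.of_map {ψ : A →ₐ[R] B} (hψ : Function.Injective ψ)
    (h : IsHopfAlgHomToGroupAlg ((groupAlgMapCoeff G ψ).comp g)) : IsHopfAlgHomToGroupAlg g := by
  refine ⟨AlgHom.ext fun c => (tensorCoeff A G).injective ?_, AlgHom.ext fun c => hψ ?_⟩
  · have hc := congr(tensorCoeff B G ($(h.1) c))
    simp only [AlgHom.comp_apply, AlgHom.coe_restrictScalars',
      tensorCoeff_groupAlgComul_groupAlgMapCoeff, tensorCoeff_tensorSquare_groupAlgMapCoeff] at hc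
    exact Finsupp.mapRange_injective ψ (map_zero ψ) hψ hc
  · have hc := congr($(h.2) c)
    simp_all [groupAlgCounit_groupAlgMapCoeff]

end HopfCondition

theorem laurentToCyclic_single (N : ℕ) (k : ℤ) (a : A) :
    laurentToCyclic A N (AddMonoidAlgebra.single k a) = AddMonoidAlgebra.single (k : ZMod N) a := by
  rw [laurentToCyclic, AddMonoidAlgebra.lift_single]
  simp [AddMonoidAlgebra.of_apply, AddMonoidAlgebra.smul_single]

theorem coeff_laurentToCyclic (N : ℕ) (x : LaurentPolynomial A) :
    (laurentToCyclic A N x).coeff = Finsupp.mapDomain (Int.cast : ℤ → ZMod N) x.coeff := by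
  induction x using AddMonoidAlgebra.induction_linear with
  | zero => simp
  | add x y hx hy => simp only [map_add, AddMonoidAlgebra.coeff_add, hx, hy, Finsupp.mapDomain_add]
  | single k a =>
    rw [laurentToCyclic_single, AddMonoidAlgebra.coeff_single, AddMonoidAlgebra.coeff_single,
      Finsupp.mapDomain_single]

theorem laurentToCyclic_groupAlgMapCoeff (ψ : A →ₐ[R] B) (N : ℕ) (x : LaurentPolynomial A) :
    laurentToCyclic B N (groupAlgMapCoeff ℤ ψ x) =
      groupAlgMapCoeff (ZMod N) ψ (laurentToCyclic A N x) := by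
  induction x using AddMonoidAlgebra.induction_linear with
  | zero => simp
  | add x y hx hy => simp only [map_add, hx, hy]
  | single k a =>
    rw [groupAlgMapCoeff_single, laurentToCyclic_single, laurentToCyclic_single,
      groupAlgMapCoeff_single]

theorem injOn_intCast_Icc {N D : ℕ} (h : 2 * D < N) :
    Set.InjOn (Int.cast : ℤ → ZMod N) (Set.Icc (-D : ℤ) D) := by
  intro a ha b hb hab
  rw [ZMod.intCast_eq_intCast_iff_dvd_sub] at hab
  have := Int.eq_zero_of_abs_lt_dvd hab (by rw [abs_lt]; simp only [Set.mem_Icc] at ha hb; omega)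
  omega

theorem coeff_laurentToCyclic_intCast {x : LaurentPolynomial A} {D N : ℕ}
    (hx : ∀ k ∈ x.coeff.support, k.natAbs ≤ D) (hN : 2 * D < N) {k : ℤ} (hk : k.natAbs ≤ D) :
    (laurentToCyclic A N x).coeff k = x.coeff k := by
  rw [coeff_laurentToCyclic]
  refine Finsupp.mapDomain_apply' _ _ (fun k' hk' => ?_) (injOn_intCast_Icc hN) ?_
  · have := hx k' hk'
    simp only [Set.mem_Icc]
    omega
  · simp only [Set.mem_Icc]
    omega

theorem coeff_mem_range_of_laurentToCyclic {ℓ : ℕ} (hℓ : 1 < ℓ) {x : LaurentPolynomial A}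
    (hx : ∀ n (m : ZMod (ℓ ^ n)),
      (laurentToCyclic A (ℓ ^ n) x).coeff m ∈ Set.range (algebraMap R A))
    (k : ℤ) : x.coeff k ∈ Set.range (algebraMap R A) := by
  by_cases hk : k ∈ x.coeff.support
  · set D := x.coeff.support.sup Int.natAbs
    have hN : 2 * D < ℓ ^ (2 * D + 1) := (Nat.lt_succ_self _).trans (Nat.lt_pow_self hℓ)
    rw [← coeff_laurentToCyclic_intCast (fun k hk => Finset.le_sup hk) hN (Finset.le_sup hk)]
    exact hx _ _
  · exact ⟨0, by rw [map_zero, Finsupp.notMem_support_iff.mp hk]⟩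

section LaurentHopfHomSet

variable {C : Type*} [CommRing C] [HopfAlgebra R C] {ℓ : ℕ}
  {u : ∀ n : ℕ, C →ₐ[R] AddMonoidAlgebra R (ZMod (ℓ ^ n))} {g : C →ₐ[R] LaurentPolynomial A}

theorem map_mem_laurentHopfHomSet (hg : g ∈ laurentHopfHomSet ℓ u A) (ψ : A →ₐ[R] B) :
    (groupAlgMapCoeff ℤ ψ).comp g ∈ laurentHopfHomSet ℓ u B := by
  refine ⟨hg.1.map ψ, fun n => AlgHom.ext fun c => ?_⟩
  have hc := congr(groupAlgMapCoeff _ ψ ($(hg.2 n) c))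
  simp only [AlgHom.comp_apply, AlgHom.coe_restrictScalars'] at hc ⊢
  rw [laurentToCyclic_groupAlgMapCoeff, hc, ← AlgHom.comp_apply, groupAlgMapCoeff_comp_ofId]

theorem mem_laurentHopfHomSet_of_map_mem {ψ : A →ₐ[R] B} (hψ : Function.Injective ψ)
    (h : (groupAlgMapCoeff ℤ ψ).comp g ∈ laurentHopfHomSet ℓ u B) :
    g ∈ laurentHopfHomSet ℓ u A := by
  refine ⟨h.1.of_map hψ, fun n => AlgHom.ext fun c => groupAlgMapCoeff_injective hψ ?_⟩
  have hc := congr($(h.2 n) c)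
  simp only [AlgHom.comp_apply, AlgHom.coe_restrictScalars'] at hc ⊢
  rw [← laurentToCyclic_groupAlgMapCoeff, hc, ← AlgHom.comp_apply (groupAlgMapCoeff _ ψ),
    groupAlgMapCoeff_comp_ofId]

theorem coeff_mem_range_of_mem_laurentHopfHomSet (hℓ : 1 < ℓ) (hg : g ∈ laurentHopfHomSet ℓ u A)
    (c : C) (k : ℤ) : (g c).coeff k ∈ Set.range (algebraMap R A) := by
  refine coeff_mem_range_of_laurentToCyclic hℓ (fun n m => ?_) k
  have hc := congr(($(hg.2 n) c).coeff m)
  simp only [AlgHom.comp_apply, AlgHom.coe_restrictScalars', coeff_groupAlgMapCoeff] at hc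
  exact ⟨_, hc.symm⟩

end LaurentHopfHomSet

theorem exists_groupAlgMapCoeff_comp_eq {C : Type*} [CommRing C] [Algebra R C]
    {ψ : A →ₐ[R] B} (hψ : Function.Injective ψ) (f : C →ₐ[R] AddMonoidAlgebra B G)
    (hf : ∀ c g, (f c).coeff g ∈ Set.range ψ) :
    ∃ f' : C →ₐ[R] AddMonoidAlgebra A G, (groupAlgMapCoeff G ψ).comp f' = f := by
  have hψ0 : Function.invFun ψ 0 = 0 := by simpa using Function.leftInverse_invFun hψ 0
  have hrange (c : C) : f c ∈ (groupAlgMapCoeff G ψ).range := by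
    refine ⟨.ofCoeff ((f c).coeff.mapRange (Function.invFun ψ) hψ0), ?_⟩
    change groupAlgMapCoeff G ψ _ = _
    ext g
    simp only [coeff_groupAlgMapCoeff, Finsupp.mapRange_apply]
    exact Function.invFun_eq (hf c g)
  let e := AlgEquiv.ofInjective _ (groupAlgMapCoeff_injective (G := G) hψ)
  exact ⟨(e.symm : _ →ₐ[R] _).comp (f.codRestrict _ hrange),
    AlgHom.ext fun c => congrArg Subtype.val (e.apply_symm_apply (f.codRestrict _ hrange c))⟩

theorem exists_ker_ofId_le_of_fg {ι : Type*} [Preorder ι] [IsDirected ι (· ≤ ·)] [Nonempty ι]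
    {B : ι → Type*} [∀ i, CommRing (B i)] [∀ i, Algebra R (B i)]
    (t : ∀ i j, i ≤ j → (B i →ₐ[R] B j)) (φ : ∀ i, B i →ₐ[R] A)
    (heventually : ∀ i (x y : B i), φ i x = φ i y →
      ∃ j, ∃ hij : i ≤ j, t i j hij x = t i j hij y)
    (hI : (RingHom.ker (Algebra.ofId R A)).FG) :
    ∃ j, RingHom.ker (Algebra.ofId R A) ≤ RingHom.ker (Algebra.ofId R (B j)) := by
  classical
  have hkill (r : R) (hr : r ∈ RingHom.ker (Algebra.ofId R A)) :
      ∃ j, algebraMap R (B j) r = 0 := by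
    obtain ⟨i⟩ := ‹Nonempty ι›
    obtain ⟨j, hij, hj⟩ := heventually i (algebraMap R (B i) r) 0 (by simpa using hr)
    exact ⟨j, by simpa using hj⟩
  choose! j hj using hkill
  obtain ⟨s, hs⟩ := hI
  obtain ⟨k, hk⟩ := Finset.exists_le (s.image j)
  refine ⟨k, hs ▸ Ideal.span_le.2 fun r hr => ?_⟩
  have hr' : r ∈ RingHom.ker (Algebra.ofId R A) := hs ▸ Ideal.subset_span hr
  change algebraMap R (B k) r = 0
  rw [← (t _ _ (hk _ (Finset.mem_image_of_mem j hr))).commutes, hj r hr', map_zero]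

end

theorem hopfHom_descends_to_finite_level_general
    {R : Type*} [CommRing R] {C : Type*} [CommRing C] [HopfAlgebra R C]
    {ℓ : ℕ} (hℓ : Nat.Prime ℓ)
    (hR : Algebra.FiniteType ℤ R)
    (u : ∀ n : ℕ, C →ₐ[R] AddMonoidAlgebra R (ZMod (ℓ ^ n)))
    {ι : Type*} [Preorder ι] [IsDirected ι (· ≤ ·)] [Nonempty ι]
    (B : ι → Type*) [∀ i, CommRing (B i)] [∀ i, Algebra R (B i)]
    (t : ∀ i j, i ≤ j → (B i →ₐ[R] B j))
    (A : Type*) [CommRing A] [Algebra R A]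
    (φ : ∀ i, B i →ₐ[R] A)
    (heventually : ∀ i (x y : B i), φ i x = φ i y →
      ∃ j, ∃ hij : i ≤ j, t i j hij x = t i j hij y)
    (f : C →ₐ[R] LaurentPolynomial A) (hf : f ∈ laurentHopfHomSet ℓ u A) :
    ∃ i, ∃ fi ∈ laurentHopfHomSet ℓ u (B i),
      (groupAlgMapCoeff ℤ (φ i)).comp fi = f := by
  have : IsNoetherianRing R := Algebra.FiniteType.isNoetherianRing ℤ R
  set I := RingHom.ker (Algebra.ofId R A)
  obtain ⟨j, hj⟩ := exists_ker_ofId_le_of_fg t φ heventually (IsNoetherian.noetherian I)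
  have hcoeff (c : C) (k : ℤ) :
      (f c).coeff k ∈ Set.range (Ideal.kerLiftAlg (Algebra.ofId R A)) := by
    obtain ⟨r, hr⟩ := coeff_mem_range_of_mem_laurentHopfHomSet hℓ.one_lt hf c k
    exact ⟨Ideal.Quotient.mk I r, hr⟩
  obtain ⟨f', rfl⟩ := exists_groupAlgMapCoeff_comp_eq (Ideal.kerLiftAlg_injective _) f hcoeff
  have hf' := mem_laurentHopfHomSet_of_map_mem (Ideal.kerLiftAlg_injective _) hf
  let ψ : R ⧸ I →ₐ[R] B j :=
    Ideal.Quotient.liftₐ I (Algebra.ofId R (B j)) fun _ hr => RingHom.mem_ker.1 (hj hr)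
  have hψ : (φ j).comp ψ = Ideal.kerLiftAlg (Algebra.ofId R A) :=
    Ideal.Quotient.algHom_ext R (Subsingleton.elim _ _)
  refine ⟨j, _, map_mem_laurentHopfHomSet hf' ψ, ?_⟩
  rw [← AlgHom.comp_assoc, groupAlgMapCoeff_comp, hψ]

/-- Local finite presentation of the functor `F` (condition `(F₂)`, Lemma 2.3.3): let `ℓ` be a
prime invertible in `R`, `R` finitely generated over `ℤ`, `C` a finitely presented commutative
Hopf `R`-algebra, and `u_n : C → R[z]/(z^{ℓⁿ} - 1)` a compatible family of Hopf algebra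
homomorphisms.  Let `(B i)` be a directed system of commutative `R`-algebras with colimit `A`
(witnessed by transition maps `t` and structure maps `φ i : B i → A` satisfying the concrete
colimit axioms below).  Then each `f ∈ F(A)` descends to some `f_i ∈ F(B i)`: there are an
index `i` and an element `f_i ∈ F(B i)` whose base change along `B i → A` equals `f`. -/
theorem hopfHom_descends_to_finite_level
    {R : Type*} [CommRing R] {C : Type*} [CommRing C] [HopfAlgebra R C]
    {ℓ : ℕ} (hℓ : Nat.Prime ℓ) (hℓR : IsUnit (ℓ : R))
    (hR : Algebra.FiniteType ℤ R) (hC : Algebra.FinitePresentation R C)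
    (u : ∀ n : ℕ, C →ₐ[R] AddMonoidAlgebra R (ZMod (ℓ ^ n)))
    (hu : ∀ n, IsHopfAlgHomToGroupAlg (u n))
    (hucomp : ∀ n, (cyclicProj R (pow_dvd_pow ℓ (Nat.le_succ n))).comp (u (n + 1)) = u n)
    {ι : Type*} [Preorder ι] [IsDirected ι (· ≤ ·)] [Nonempty ι]
    (B : ι → Type*) [∀ i, CommRing (B i)] [∀ i, Algebra R (B i)]
    (t : ∀ i j, i ≤ j → (B i →ₐ[R] B j))
    (ht_id : ∀ i (x : B i), t i i le_rfl x = x)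
    (ht_comp : ∀ i j k (hij : i ≤ j) (hjk : j ≤ k) (x : B i),
      t j k hjk (t i j hij x) = t i k (hij.trans hjk) x)
    (A : Type*) [CommRing A] [Algebra R A]
    (φ : ∀ i, B i →ₐ[R] A)
    (hφ : ∀ i j (hij : i ≤ j) (x : B i), φ j (t i j hij x) = φ i x)
    (hexhaust : ∀ a : A, ∃ i, ∃ x : B i, φ i x = a)
    (heventually : ∀ i (x y : B i), φ i x = φ i y →
      ∃ j, ∃ hij : i ≤ j, t i j hij x = t i j hij y)
    (f : C →ₐ[R] LaurentPolynomial A) (hf : f ∈ laurentHopfHomSet ℓ u A) :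
    ∃ i, ∃ fi ∈ laurentHopfHomSet ℓ u (B i),
      (groupAlgMapCoeff ℤ (φ i)).comp fi = f :=
  hopfHom_descends_to_finite_level_general hℓ hR u B t A φ heventually f hf
end
end
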